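/- For each k ≥ 1, define trees A_k and E_k recursively: A₁ is a single node; E₁ is a root with infinitely many leaf successors; A_{k+1} is a root with infinitely many copies of E_k attached above; E_{k+1} is a root with infinitely many copies of A_k and infinitely many copies of E_k attached above. Then for every k, A_k and E_k are non-isomorphic trees of height at most k, and there is a first-order formula φ_k(x) in the language of leveled trees such that the root of E_k satisfies φ_k and the root of A_k satisfies ¬φ_k. -/

import Mathlib

open FirstOrder Language

def L0 : FirstOrder.Language where
  Functions := fun _ => Empty
  Relations := fun n => match n with
    | 1 => ℕ
    | 2 => ℕ
    | _ => Empty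

def pRel (i : ℕ) : L0.Relations 1 := i

def ltRel (i : ℕ) : L0.Relations 2 := i

def L0Str {M : Type*} (P : ℕ → M → Prop) (lt : ℕ → M → M → Prop) : L0.Structure M where
  funMap := fun {n} f _ => Empty.elim f
  RelMap := fun {n} => match n with
    | 0 => fun r _ => Empty.elim r
    | 1 => fun i v => P i (v 0)
    | 2 => fun i v => lt i (v 0) (v 1)
    | (_ + 3) => fun r _ => Empty.elim r

/-- `x` satisfies the predicate `Pᵢ`. -/
def pOn {M : Type*} [L0.Structure M] (i : ℕ) (x : M) : Prop :=
  Structure.RelMap (pRel i) ![x]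

/-- `x <ᵢ y`. -/
def ltOn {M : Type*} [L0.Structure M] (i : ℕ) (x y : M) : Prop :=
  Structure.RelMap (ltRel i) ![x, y]

/-- The formula `Pᵢ t`. -/
def pFml {n : ℕ} (i : ℕ) (t : L0.Term (Empty ⊕ Fin n)) : L0.BoundedFormula Empty n :=
  (pRel i).boundedFormula₁ t

/-- The formula `t₁ <ᵢ t₂`. -/
def ltFml {n : ℕ} (i : ℕ) (t₁ t₂ : L0.Term (Empty ⊕ Fin n)) : L0.BoundedFormula Empty n :=
  (ltRel i).boundedFormula₂ t₁ t₂

/-- `Pᵢ` and `Pⱼ` are disjoint. -/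
def axDisj (i j : ℕ) : L0.Sentence := ∀' ((pFml i &0 ⊓ pFml j &0).not)

/-- `<ᵢ ⊆ Pᵢ × Pᵢ₊₁`. -/
def axDom (i : ℕ) : L0.Sentence := ∀' ∀' ((ltFml i &0 &1).imp (pFml i &0 ⊓ pFml (i + 1) &1))

/-- Existence of predecessors. -/
def axEx (i : ℕ) : L0.Sentence := ∀' ((pFml (i + 1) &0).imp (∃' (pFml i &1 ⊓ ltFml i &1 &0)))

/-- Uniqueness of predecessors. -/
def axUniq (i : ℕ) : L0.Sentence :=
  ∀' ∀' ∀' (((ltFml i &0 &2) ⊓ (ltFml i &1 &2)).imp (Term.bdEqual &0 &1))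

/-- The base theory `T₀` of leveled forests. -/
def T0 : L0.Theory :=
  {φ | (∃ i j, i ≠ j ∧ φ = axDisj i j) ∨ (∃ i, φ = axDom i) ∨
    (∃ i, φ = axEx i) ∨ (∃ i, φ = axUniq i)}

/-- A bare `L₀`-structure: a carrier with unary predicates `Pᵢ` and binary relations `<ᵢ`. -/
structure PStr where
  α : Type
  P : ℕ → α → Prop
  lt : ℕ → α → α → Prop

/-- The `L₀`-structure associated to a `PStr`. -/
def PStr.toL0 (S : PStr) : L0.Structure S.α :=
  L0Str S.P S.lt

/-- The element `x` satisfies the `L₀`-formula `φ` (in one free variable) in `S`. -/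
def PRealize (S : PStr) (φ : L0.Formula Unit) (x : S.α) : Prop :=
  @FirstOrder.Language.Formula.Realize L0 S.α S.toL0 Unit φ (fun _ => x)

/-- `S` satisfies the leveled-forest theory `T₀` (semantically). -/
def PStr.IsT0 (S : PStr) : Prop :=
  (∀ i j, i ≠ j → ∀ x, S.P i x → ¬S.P j x) ∧
  (∀ i x y, S.lt i x y → S.P i x ∧ S.P (i + 1) y) ∧
  (∀ i y, S.P (i + 1) y → ∃ x, S.lt i x y) ∧
  (∀ i x x' y, S.lt i x y → S.lt i x' y → x = x')

/-- An isomorphism of `L₀`-structures. -/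
structure PStrIso (S T : PStr) where
  toEquiv : S.α ≃ T.α
  map_P : ∀ i x, S.P i x ↔ T.P i (toEquiv x)
  map_lt : ∀ i x y, S.lt i x y ↔ T.lt i (toEquiv x) (toEquiv y)

/-- The single-node tree (one root at level `0`). -/
def onePt : PStr where
  α := PUnit
  P := fun i _ => i = 0
  lt := fun _ _ _ => False

/-- A new root with countably many copies of `S` attached above (all levels of `S` shifted up by
one, roots of the copies linked to the new root by `<₀`). -/
def PStr.attach (S : PStr) : PStr where
  α := Option (ℕ × S.α)
  P := fun i x => match i, x with
    | 0, none => True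
    | 0, some _ => False
    | _ + 1, none => False
    | i + 1, some p => S.P i p.2
  lt := fun i x y => match i, x, y with
    | 0, none, some p => S.P 0 p.2
    | 0, _, _ => False
    | _ + 1, none, _ => False
    | _ + 1, _, none => False
    | i + 1, some p, some q => p.1 = q.1 ∧ S.lt i p.2 q.2

/-- The disjoint union of two `L₀`-structures. -/
def PStr.sum (S T : PStr) : PStr where
  α := S.α ⊕ T.α
  P := fun i x => x.elim (S.P i) (T.P i)
  lt := fun i x y => match x, y with
    | .inl a, .inl b => S.lt i a b
    | .inr a, .inr b => T.lt i a b
    | _, _ => False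

/-- `AEtree k = (A_{k+1}, E_{k+1})`: `A₁` is a single node, `E₁` is a root with infinitely many
leaf successors, `A_{k+2}` is a root with infinitely many copies of `E_{k+1}` above, and
`E_{k+2}` is a root with infinitely many copies of `A_{k+1}` and infinitely many copies of
`E_{k+1}` above. -/
def AEtree : ℕ → PStr × PStr
  | 0 => (onePt, onePt.attach)
  | k + 1 => ((AEtree k).2.attach, (PStr.sum (AEtree k).1 (AEtree k).2).attach)

/-- The tree `A_k` (for `k ≥ 1`). -/
def Atree (k : ℕ) : PStr := (AEtree (k - 1)).1

/-- The tree `E_k` (for `k ≥ 1`). -/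
def Etree (k : ℕ) : PStr := (AEtree (k - 1)).2

/-!
Let `ψ₁(x)` say that `x` has a child and `ψ_{k+1}(x)` that `x` has a child failing `ψ_k`.
By induction on `k`, the root of `E_k` satisfies `ψ_k` and the root of `A_k` does not: every
child of the root of `A_{k+1}` is the root of a copy of `E_k`, hence satisfies `ψ_k`, while the
root of `E_{k+1}` has a child rooting a copy of `A_k`. Isomorphisms preserve `ψ_k`, so
`A_k ≇ E_k`.
-/

attribute [local instance] PStr.toL0

/-- `psi k l` is `ψ_{k+1}` for a node at level `l`; the level is a parameter because each
`<ᵢ` carries its own level. -/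
def psi : ℕ → ℕ → L0.BoundedFormula Empty 1
  | 0, l => ∃' ltFml l &0 &1
  | k + 1, l => ∃' (ltFml l &0 &1 ⊓ ∼((psi k (l + 1)).liftAt 1 0))

namespace PStr

def Psi (S : PStr) : ℕ → ℕ → S.α → Prop
  | 0, l, x => ∃ y, S.lt l x y
  | k + 1, l, x => ∃ y, S.lt l x y ∧ ¬S.Psi k (l + 1) y

theorem realize_psi (S : PStr) (k l : ℕ) (x : S.α) :
    (psi k l).Realize Empty.elim ![x] ↔ S.Psi k l x := by
  induction k generalizing l x with
  | zero => simp only [psi, Psi, BoundedFormula.realize_ex]; rfl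
  | succ k ih =>
    simp only [psi, Psi, BoundedFormula.realize_ex, BoundedFormula.realize_inf,
      BoundedFormula.realize_not, BoundedFormula.realize_liftAt_one (Nat.zero_le 1)]
    refine exists_congr fun y => and_congr Iff.rfl (not_congr ?_)
    rw [← ih]
    refine iff_of_eq (congrArg _ (funext fun i => ?_))
    fin_cases i
    rfl

theorem pRealize_psi (S : PStr) (k : ℕ) (x : S.α) :
    PRealize S ((psi k 0).toFormula.relabel fun _ => ()) x ↔ S.Psi k 0 x := by
  rw [PRealize, Formula.realize_relabel, BoundedFormula.realize_toFormula, ← realize_psi]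
  refine iff_of_eq (congrArg₂ _ (funext fun e => e.elim) (funext fun i => ?_))
  fin_cases i
  rfl

theorem psi_map_iff {S T : PStr} (f : S.α → T.α) (d : ℕ)
    (hf : ∀ l x z, T.lt (l + d) (f x) z ↔ ∃ y, S.lt l x y ∧ f y = z) (k l : ℕ) (x : S.α) :
    T.Psi k (l + d) (f x) ↔ S.Psi k l x := by
  induction k generalizing l x with
  | zero =>
    simp only [Psi, hf]
    exact ⟨fun ⟨_, y, hy, _⟩ => ⟨y, hy⟩, fun ⟨y, hy⟩ => ⟨_, y, hy, rfl⟩⟩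
  | succ k ih =>
    simp only [Psi]
    constructor
    · rintro ⟨z, hz, hn⟩
      obtain ⟨y, hy, rfl⟩ := (hf l x z).1 hz
      exact ⟨y, hy, fun h => hn (by rwa [Nat.add_right_comm, ih])⟩
    · rintro ⟨y, hy, hn⟩
      exact ⟨f y, (hf l x _).2 ⟨y, hy, rfl⟩, fun h => hn (by rwa [Nat.add_right_comm, ih] at h)⟩

theorem psi_attach_some (S : PStr) (k l n : ℕ) (x : S.α) :
    S.attach.Psi k (l + 1) (some (n, x)) ↔ S.Psi k l x := by
  refine psi_map_iff (T := S.attach) (fun x => some (n, x)) 1 (fun l x z => ?_) k l x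
  rcases z with _ | ⟨m, y⟩
  · simp [attach]
  · simp [attach, eq_comm, and_comm]

theorem psi_sum_inl (S T : PStr) (k l : ℕ) (x : S.α) :
    (S.sum T).Psi k l (.inl x) ↔ S.Psi k l x := by
  refine psi_map_iff (T := S.sum T) Sum.inl 0 (fun l x z => ?_) k l x
  rcases z with y | y <;> simp [sum]

theorem psi_succ_attach_none (S : PStr) (k : ℕ) :
    S.attach.Psi (k + 1) 0 none ↔ ∃ x, S.P 0 x ∧ ¬S.Psi k 0 x := by
  constructor
  · rintro ⟨_ | ⟨n, x⟩, hx, hn⟩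
    · exact hx.elim
    · exact ⟨x, hx, by rwa [psi_attach_some] at hn⟩
  · rintro ⟨x, hx, hn⟩
    exact ⟨some (0, x), hx, by rwa [psi_attach_some]⟩

end PStr

theorem PStrIso.psi_iff {S T : PStr} (f : PStrIso S T) (k l : ℕ) (x : S.α) :
    T.Psi k l (f.toEquiv x) ↔ S.Psi k l x := by
  refine PStr.psi_map_iff f.toEquiv 0 (fun l x z => ⟨fun h => ?_, ?_⟩) k l x
  · exact ⟨f.toEquiv.symm z, by simpa [f.map_lt] using h, by simp⟩
  · rintro ⟨y, hy, rfl⟩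
    exact (f.map_lt l x y).1 hy

namespace PStr

def HeightLE (S : PStr) (h : ℕ) : Prop := ∀ x, ∃ i ≤ h, S.P i x

theorem HeightLE.mono {S : PStr} {h h' : ℕ} (hS : S.HeightLE h) (hh : h ≤ h') : S.HeightLE h' :=
  fun x => (hS x).imp fun _ ⟨hi, hx⟩ => ⟨hi.trans hh, hx⟩

theorem onePt_heightLE : onePt.HeightLE 0 := fun _ => ⟨0, le_rfl, rfl⟩

theorem HeightLE.attach {S : PStr} {h : ℕ} (hS : S.HeightLE h) : S.attach.HeightLE (h + 1)
  | none => ⟨0, Nat.zero_le _, trivial⟩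
  | some (_, x) => let ⟨i, hi, hx⟩ := hS x; ⟨i + 1, by omega, hx⟩

theorem HeightLE.sum {S T : PStr} {h : ℕ} (hS : S.HeightLE h) (hT : T.HeightLE h) :
    (S.sum T).HeightLE h
  | .inl x => hS x
  | .inr x => hT x

theorem onePt_isT0 : onePt.IsT0 :=
  ⟨fun _ _ hij _ hi hj => hij (hi.trans hj.symm), fun _ _ _ h => h.elim,
    fun _ _ h => absurd h (Nat.succ_ne_zero _), fun _ _ _ _ h => h.elim⟩

theorem IsT0.attach {S : PStr} (hS : S.IsT0) : S.attach.IsT0 := by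
  obtain ⟨hdisj, hdom, hex, huniq⟩ := hS
  refine ⟨?_, ?_, ?_, ?_⟩
  · rintro (_ | i) (_ | j) hij (_ | ⟨n, x⟩) hi hj
    all_goals first | exact hij rfl | exact hi | exact hj | exact hdisj i j (by omega) x hi hj
  · intro i x y h
    match i, x, y, h with
    | 0, none, some p, h => exact ⟨trivial, h⟩
    | i+1, some p, some q, h => exact hdom i _ _ h.2
  · intro i y hy
    match i, y, hy with
    | 0, some p, hy => exact ⟨none, hy⟩
    | i+1, some q, hy =>
      obtain ⟨x, hx⟩ := hex i _ hy
      exact ⟨some (q.1, x), rfl, hx⟩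
  · intro i x x' y h h'
    match i, x, x', y, h, h' with
    | 0, none, none, some p, h, h' => rfl
    | i+1, some (n, a), some (n', a'), some (m, b), ⟨hn, h⟩, ⟨hn', h'⟩ =>
      have hn : n = m := hn
      have hn' : n' = m := hn'
      rw [hn, hn', huniq i a a' b h h']

theorem IsT0.sum {S T : PStr} (hS : S.IsT0) (hT : T.IsT0) : (S.sum T).IsT0 := by
  obtain ⟨hdisjS, hdomS, hexS, huniqS⟩ := hS
  obtain ⟨hdisjT, hdomT, hexT, huniqT⟩ := hT
  refine ⟨?_, ?_, ?_, ?_⟩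
  · rintro i j hij (x | x)
    exacts [hdisjS i j hij x, hdisjT i j hij x]
  · intro i x y h
    match x, y, h with
    | .inl x, .inl y, h => exact hdomS i x y h
    | .inr x, .inr y, h => exact hdomT i x y h
  · rintro i (y | y) hy
    · obtain ⟨x, hx⟩ := hexS i y hy
      exact ⟨.inl x, hx⟩
    · obtain ⟨x, hx⟩ := hexT i y hy
      exact ⟨.inr x, hx⟩
  · intro i x x' y h h'
    match x, x', y, h, h' with
    | .inl x, .inl x', .inl y, h, h' => exact congrArg _ (huniqS i x x' y h h')
    | .inr x, .inr x', .inr y, h, h' => exact congrArg _ (huniqT i x x' y h h')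

theorem attach_P_zero_iff (S : PStr) (x : S.attach.α) : S.attach.P 0 x ↔ x = none := by
  rcases x with _ | _ <;> simp [attach]

theorem existsUnique_root_attach (S : PStr) : ∃! r, S.attach.P 0 r :=
  ⟨none, trivial, fun y hy => (attach_P_zero_iff S y).1 hy⟩

end PStr

open PStr

theorem AEtree_isT0 : ∀ m, (AEtree m).1.IsT0 ∧ (AEtree m).2.IsT0
  | 0 => ⟨onePt_isT0, onePt_isT0.attach⟩
  | m + 1 => let ⟨hA, hE⟩ := AEtree_isT0 m; ⟨hE.attach, (hA.sum hE).attach⟩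

theorem AEtree_heightLE : ∀ m, (AEtree m).1.HeightLE (m + 1) ∧ (AEtree m).2.HeightLE (m + 1)
  | 0 => ⟨onePt_heightLE.mono (Nat.zero_le 1), onePt_heightLE.attach⟩
  | m + 1 => let ⟨hA, hE⟩ := AEtree_heightLE m; ⟨hE.attach, (hA.sum hE).attach⟩

theorem AEtree_existsUnique_root : ∀ m, (∃! r, (AEtree m).1.P 0 r) ∧ ∃! r, (AEtree m).2.P 0 r
  | 0 => ⟨⟨PUnit.unit, rfl, fun _ _ => rfl⟩, existsUnique_root_attach onePt⟩
  | _ + 1 => ⟨existsUnique_root_attach _, existsUnique_root_attach _⟩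

theorem AEtree_psi (m : ℕ) :
    (∀ r, (AEtree m).1.P 0 r → ¬(AEtree m).1.Psi m 0 r) ∧
      ∀ r, (AEtree m).2.P 0 r → (AEtree m).2.Psi m 0 r := by
  induction m with
  | zero =>
    refine ⟨fun _ _ ⟨_, h⟩ => h, fun r hr => ?_⟩
    obtain rfl := (attach_P_zero_iff onePt r).1 hr
    exact ⟨some (0, PUnit.unit), rfl⟩
  | succ m ih =>
    obtain ⟨hA, hE⟩ := ih
    obtain ⟨rA, hrA, -⟩ := (AEtree_existsUnique_root m).1
    constructor
    · intro r hr h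
      obtain rfl := (attach_P_zero_iff (AEtree m).2 r).1 hr
      obtain ⟨x, hx, hn⟩ := ((AEtree m).2.psi_succ_attach_none m).1 h
      exact hn (hE x hx)
    · intro r hr
      obtain rfl := (attach_P_zero_iff ((AEtree m).1.sum (AEtree m).2) r).1 hr
      refine (((AEtree m).1.sum (AEtree m).2).psi_succ_attach_none m).2 ⟨.inl rA, hrA, ?_⟩
      rw [psi_sum_inl]
      exact hA rA hrA

/-- for every `k ≥ 1`, `A_k` and `E_k` are non-isomorphic trees (single-rooted
models of `T₀` with every node at some level) of height at most `k`, and there is a first-order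
formula `φ_k(x)` in the language of leveled trees satisfied by the root of `E_k` but not by the
root of `A_k`. -/
theorem back_and_forth_trees (k : ℕ) (hk : 1 ≤ k) :
    (Atree k).IsT0 ∧ (Etree k).IsT0 ∧
    (∃! r, (Atree k).P 0 r) ∧ (∃! r, (Etree k).P 0 r) ∧
    (∀ x : (Atree k).α, ∃ i ≤ k, (Atree k).P i x) ∧
    (∀ x : (Etree k).α, ∃ i ≤ k, (Etree k).P i x) ∧
    IsEmpty (PStrIso (Atree k) (Etree k)) ∧
    (∃ φ : L0.Formula Unit,
      (∀ r, (Etree k).P 0 r → PRealize (Etree k) φ r) ∧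
      (∀ r, (Atree k).P 0 r → ¬PRealize (Atree k) φ r)) := by
  obtain ⟨m, rfl⟩ : ∃ m, k = m + 1 := ⟨k - 1, by omega⟩
  obtain ⟨hAT0, hET0⟩ := AEtree_isT0 m
  obtain ⟨hAroot, hEroot⟩ := AEtree_existsUnique_root m
  obtain ⟨hAheight, hEheight⟩ := AEtree_heightLE m
  obtain ⟨hApsi, hEpsi⟩ := AEtree_psi m
  refine ⟨hAT0, hET0, hAroot, hEroot, hAheight, hEheight, ⟨fun f => ?_⟩, ?_⟩
  · obtain ⟨rA, hrA, -⟩ := hAroot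
    exact hApsi rA hrA ((f.psi_iff m 0 rA).1 (hEpsi _ ((f.map_P 0 rA).1 hrA)))
  · exact ⟨_, fun r hr => (pRealize_psi _ m r).2 (hEpsi r hr),
      fun r hr h => hApsi r hr ((pRealize_psi _ m r).1 h)⟩
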